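/- For every integer n ≥ 1, the number of cyclic permutations of length n avoiding both cyclic patterns [1234] and [1423] equals 1 + C(n−1, 2), where C(n−1,2) is the binomial coefficient; that is, #Av_n([1234],[1423]) = 1 + binom(n−1, 2). -/

import Mathlib

/-- A sequence `σ` of length `n` (with distinct values) contains the pattern `π`
of length `k` if some subsequence of `σ` is order isomorphic to `π`. -/
def ContainsPat {n k : ℕ} (σ : Fin n → Fin n) (π : Fin k → ℕ) : Prop :=
  ∃ f : Fin k → Fin n, StrictMono f ∧ ∀ i j : Fin k, π i < π j ↔ σ (f i) < σ (f j)

/-- The rotation of the sequence `σ` starting at position `r`. -/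
def rotSeq {n : ℕ} (σ : Fin n → Fin n) (r : Fin n) : Fin n → Fin n :=
  fun i => σ (i + r)

/-- The cyclic permutation `[σ]` contains the cyclic pattern `[π]` if some
rotation of `σ` contains `π` linearly. -/
def CycContains {n k : ℕ} (σ : Fin n → Fin n) (π : Fin k → ℕ) : Prop :=
  ∃ r : Fin n, ContainsPat (rotSeq σ r) π

/-- The cyclic permutation `[σ]` avoids the cyclic pattern `[π]`. -/
def CycAvoids {n k : ℕ} (σ : Fin n → Fin n) (π : Fin k → ℕ) : Prop :=
  ¬ CycContains σ π

/-- The cyclic permutation `[σ]`, i.e. the set of all rotations of `σ`. -/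
def CycClass {n : ℕ} (σ : Fin n → Fin n) : Set (Fin n → Fin n) :=
  Set.range (rotSeq σ)

/-- The set of cyclic permutations (rotation classes) of length `n` all of whose
representatives are permutations and which satisfy the (rotation-invariant)
predicate `P`. -/
def AvClasses (n : ℕ) (P : (Fin n → Fin n) → Prop) : Set (Set (Fin n → Fin n)) :=
  { C | ∃ σ : Equiv.Perm (Fin n), C = CycClass ⇑σ ∧ P ⇑σ }

/-- The cyclic descent number: the number of indices `i` (mod `n`) with
`σ i > σ (i+1)`. -/
def cdes {n : ℕ} (σ : Fin n → Fin n) : ℕ :=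
  (Finset.univ.filter fun i : Fin n =>
    σ ⟨(↑i + 1) % n, Nat.mod_lt _ i.pos⟩ < σ i).card

/-- The cyclic peak number: the number of indices `i` (mod `n`) with
`σ (i-1) < σ i > σ (i+1)`. -/
def cpk {n : ℕ} (σ : Fin n → Fin n) : ℕ :=
  (Finset.univ.filter fun i : Fin n =>
    σ ⟨(↑i + (n - 1)) % n, Nat.mod_lt _ i.pos⟩ < σ i ∧
    σ ⟨(↑i + 1) % n, Nat.mod_lt _ i.pos⟩ < σ i).card

/-!
Rotating a permutation so that its value `0` comes first picks one representative from each
rotation class. For such a representative `σ = 0 τ` (`n = m + 1`), a cyclic occurrence of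
`[1234]` or `[1423]` exists iff `τ` contains `123` or `312` (put `0` in front of the occurrence;
conversely, every rotation of `1234` and of `1423` contains `123` or `312` not starting at its
least entry). If `τ` avoids both, then everything before and everything after its maximum is
decreasing, and the entries before the maximum form an interval of values; so `τ` is
`a, a-1, …, b+1, m, …, a+1, b, …, 1` and is determined by the interval `(b, a]` of values before
the maximum, which is empty or one of the `C(m, 2)` intervals with `0 ≤ b < a < m`.
-/

section Rotation

variable {n : ℕ} [NeZero n]

theorem rotSeq_rotSeq (σ : Fin n → Fin n) (r u : Fin n) :
    rotSeq (rotSeq σ r) u = rotSeq σ (u + r) := by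
  funext i
  simp [rotSeq, add_assoc]

theorem rotSeq_zero (σ : Fin n → Fin n) : rotSeq σ 0 = σ := by
  funext i
  simp [rotSeq]

theorem cycContains_rotSeq {k : ℕ} (σ : Fin n → Fin n) (r : Fin n) (π : Fin k → ℕ) :
    CycContains (rotSeq σ r) π ↔ CycContains σ π := by
  constructor
  · rintro ⟨u, h⟩
    exact ⟨u + r, by rwa [rotSeq_rotSeq] at h⟩
  · rintro ⟨u, h⟩
    exact ⟨u - r, by rwa [rotSeq_rotSeq, sub_add_cancel]⟩

theorem cycAvoids_rotSeq {k : ℕ} (σ : Fin n → Fin n) (r : Fin n) (π : Fin k → ℕ) :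
    CycAvoids (rotSeq σ r) π ↔ CycAvoids σ π :=
  not_congr (cycContains_rotSeq σ r π)

theorem cycClass_rotSeq (σ : Fin n → Fin n) (r : Fin n) : CycClass (rotSeq σ r) = CycClass σ := by
  ext τ
  constructor
  · rintro ⟨u, rfl⟩
    exact ⟨u + r, (rotSeq_rotSeq σ r u).symm⟩
  · rintro ⟨u, rfl⟩
    exact ⟨u - r, by rw [rotSeq_rotSeq, sub_add_cancel]⟩

theorem ncard_avClasses {P : (Fin n → Fin n) → Prop} (hP : ∀ σ r, P (rotSeq σ r) ↔ P σ) :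
    (AvClasses n P).ncard = {σ : Equiv.Perm (Fin n) | σ 0 = 0 ∧ P σ}.ncard := by
  have himage : AvClasses n P =
      (fun σ : Equiv.Perm (Fin n) => CycClass ⇑σ) '' {σ | σ 0 = 0 ∧ P σ} := by
    ext C
    constructor
    · rintro ⟨σ, rfl, hσ⟩
      refine ⟨(Equiv.addRight (σ.symm 0)).trans σ, ⟨?_, (hP σ _).2 hσ⟩, cycClass_rotSeq σ _⟩
      simp
    · rintro ⟨σ, ⟨-, hσ⟩, rfl⟩
      exact ⟨σ, rfl, hσ⟩
  have hinj : Set.InjOn (fun σ : Equiv.Perm (Fin n) => CycClass ⇑σ) {σ | σ 0 = 0 ∧ P σ} := by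
    rintro σ ⟨hσ0, -⟩ τ ⟨hτ0, -⟩ hστ
    obtain ⟨r, hr⟩ : ⇑τ ∈ CycClass ⇑σ := by
      rw [show CycClass ⇑σ = CycClass ⇑τ from hστ]
      exact ⟨0, rotSeq_zero _⟩
    obtain rfl : r = 0 := σ.injective (by simpa [rotSeq, hσ0, hτ0] using congrFun hr 0)
    rw [rotSeq_zero] at hr
    exact DFunLike.coe_injective hr
  rw [himage, hinj.ncard_image]

end Rotation

theorem exists_rotation_strictMono {n : ℕ} {f : Fin 4 → Fin n} (hf : StrictMono f) (r : Fin n) :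
    ∃ c : Fin 4, StrictMono fun i => f (i + c) + r := by
  have h01 : f 0 < f 1 := hf (by decide)
  have h12 : f 1 < f 2 := hf (by decide)
  have h23 : f 2 < f 3 := hf (by decide)
  rw [Fin.lt_def] at h01 h12 h23
  have hr := r.isLt
  have h3 := (f 3).isLt
  have hval : ∀ i, ((f i + r : Fin n) : ℕ) = if n ≤ f i + r then f i + r - n else f i + r :=
    fun i => Fin.val_add_eq_ite _ _
  have of_succ : ∀ c : Fin 4, (∀ i : Fin 3, f (i.castSucc + c) + r < f (i.succ + c) + r) →
      ∃ c : Fin 4, StrictMono fun i => f (i + c) + r :=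
    fun c hc => ⟨c, Fin.strictMono_iff_lt_succ.2 hc⟩
  -- `c` is the first index whose position wraps around past `n`
  by_cases w0 : n ≤ (f 0 : ℕ) + r
  · exact of_succ 0 fun i => by fin_cases i <;> simp [Fin.lt_def, hval] <;> split_ifs <;> omega
  by_cases w1 : n ≤ (f 1 : ℕ) + r
  · exact of_succ 1 fun i => by fin_cases i <;> simp [Fin.lt_def, hval] <;> split_ifs <;> omega
  by_cases w2 : n ≤ (f 2 : ℕ) + r
  · exact of_succ 2 fun i => by fin_cases i <;> simp [Fin.lt_def, hval] <;> split_ifs <;> omega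
  by_cases w3 : n ≤ (f 3 : ℕ) + r
  · exact of_succ 3 fun i => by fin_cases i <;> simp [Fin.lt_def, hval] <;> split_ifs <;> omega
  · exact of_succ 0 fun i => by fin_cases i <;> simp [Fin.lt_def, hval] <;> split_ifs <;> omega

structure TailAvoids (m : ℕ) (f : ℕ → ℕ) : Prop where
  no123 : ∀ ⦃i j k⦄, 0 < i → i < j → j < k → k ≤ m → ¬(f i < f j ∧ f j < f k)
  no312 : ∀ ⦃i j k⦄, 0 < i → i < j → j < k → k ≤ m → ¬(f j < f k ∧ f k < f i)

/-- Extended by `0` past position `m`, like `avoider` below, so that the two can be compared as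
functions. -/
def valSeq {m : ℕ} (σ : Fin (m + 1) → Fin (m + 1)) (p : ℕ) : ℕ :=
  if h : p < m + 1 then σ ⟨p, h⟩ else 0

section ValSeq

variable {m : ℕ}

theorem valSeq_val (σ : Fin (m + 1) → Fin (m + 1)) (p : Fin (m + 1)) : valSeq σ p = σ p :=
  dif_pos p.isLt

theorem valSeq_zero (σ : Fin (m + 1) → Fin (m + 1)) : valSeq σ 0 = σ 0 :=
  valSeq_val σ 0

theorem valSeq_of_lt (σ : Fin (m + 1) → Fin (m + 1)) {p : ℕ} (hp : m < p) : valSeq σ p = 0 :=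
  dif_neg (by omega)

theorem valSeq_injective : Function.Injective (valSeq (m := m)) := by
  intro σ τ h
  funext p
  exact Fin.ext (by simpa only [valSeq_val] using congrFun h p)

theorem bijOn_valSeq (σ : Equiv.Perm (Fin (m + 1))) :
    Set.BijOn (valSeq σ) (Set.Iic m) (Set.Iic m) := by
  have hval : ∀ (p : ℕ) (hp : p ≤ m), valSeq σ p = σ ⟨p, by omega⟩ :=
    fun p hp => dif_pos (by omega)
  refine ⟨fun p hp => ?_, fun p hp q hq h => ?_, fun v hv => ?_⟩
  · rw [Set.mem_Iic, hval p hp]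
    exact Nat.le_of_lt_succ (Fin.isLt _)
  · rw [hval p hp, hval q hq, Fin.val_inj, σ.apply_eq_iff_eq] at h
    exact congrArg Fin.val h
  · refine ⟨σ.symm ⟨v, by simpa [Nat.lt_succ_iff] using hv⟩, Nat.le_of_lt_succ (Fin.isLt _), ?_⟩
    rw [valSeq_val, Equiv.apply_symm_apply]

theorem exists_valSeq_eq {f : ℕ → ℕ} (hf : Set.BijOn f (Set.Iic m) (Set.Iic m))
    (hf0 : ∀ p, m < p → f p = 0) : ∃ σ : Equiv.Perm (Fin (m + 1)), valSeq σ = f := by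
  let g : Fin (m + 1) → Fin (m + 1) := fun p =>
    ⟨f p, Nat.lt_succ_of_le (hf.mapsTo (Nat.le_of_lt_succ p.isLt))⟩
  have hg : Function.Injective g := fun p q h =>
    Fin.ext (hf.injOn (Nat.le_of_lt_succ p.isLt) (Nat.le_of_lt_succ q.isLt) (congrArg Fin.val h))
  refine ⟨Equiv.ofBijective g (Finite.injective_iff_bijective.mp hg), funext fun p => ?_⟩
  by_cases hp : p < m + 1
  · exact valSeq_val _ ⟨p, hp⟩
  · rw [valSeq_of_lt _ (by omega), hf0 p (by omega)]

end ValSeq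

section BijOn

variable {m : ℕ} {f : ℕ → ℕ}

theorem ne_of_bijOn_Iic (hf : Set.BijOn f (Set.Iic m) (Set.Iic m)) {p q : ℕ} (hp : p ≤ m)
    (hq : q ≤ m) (hpq : p ≠ q) : f p ≠ f q :=
  fun h => hpq (hf.injOn hp hq h)

theorem pos_of_bijOn_Iic (hf : Set.BijOn f (Set.Iic m) (Set.Iic m)) (h0 : f 0 = 0) {p : ℕ}
    (hp : 0 < p) (hpm : p ≤ m) : 0 < f p :=
  Nat.pos_of_ne_zero (h0 ▸ ne_of_bijOn_Iic hf hpm (Nat.zero_le m) hp.ne')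

end BijOn

section Patterns

variable {m : ℕ} {σ : Equiv.Perm (Fin (m + 1))}

/-- `hπ`: every rotation of `π` contains `123` or `312` whose first entry is not the least entry
of `π`; this entry then sits at a nonzero position, as `σ` takes its least value `0` at `0`. -/
theorem not_tailAvoids_of_cycContains (hσ0 : σ 0 = 0) {π : Fin 4 → ℕ}
    (hπ : ∀ c : Fin 4, ∃ i j k : Fin 4, i < j ∧ j < k ∧ (∃ d, π (d + c) < π (i + c)) ∧
      ((π (i + c) < π (j + c) ∧ π (j + c) < π (k + c)) ∨
        (π (j + c) < π (k + c) ∧ π (k + c) < π (i + c))))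
    (h : CycContains σ π) : ¬TailAvoids m (valSeq σ) := by
  obtain ⟨r, f, hf, hfπ⟩ := h
  obtain ⟨c, hc⟩ := exists_rotation_strictMono hf r
  obtain ⟨i, j, k, hij, hjk, ⟨d, hd⟩, hpat⟩ := hπ c
  set P : Fin 4 → Fin (m + 1) := fun x => f (x + c) + r
  have hP : ∀ x y, π (x + c) < π (y + c) ↔ valSeq σ (P x) < valSeq σ (P y) := by
    intro x y
    rw [valSeq_val, valSeq_val, ← Fin.lt_def]
    exact hfπ _ _
  have hPi : 0 < (P i : ℕ) := by
    refine Nat.pos_of_ne_zero fun h => ?_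
    have := (hfπ _ _).1 hd
    simp only [rotSeq, Fin.lt_def] at this
    rw [show f (i + c) + r = 0 from Fin.ext h, hσ0] at this
    exact Nat.not_lt_zero _ this
  intro hT
  have hPij : (P i : ℕ) < P j := hc hij
  have hPjk : (P j : ℕ) < P k := hc hjk
  have hPk : (P k : ℕ) ≤ m := Nat.le_of_lt_succ (P k).isLt
  rcases hpat with ⟨h1, h2⟩ | ⟨h1, h2⟩
  · exact hT.no123 hPi hPij hPjk hPk ⟨(hP i j).1 h1, (hP j k).1 h2⟩
  · exact hT.no312 hPi hPij hPjk hPk ⟨(hP j k).1 h1, (hP k i).1 h2⟩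

theorem cycContains_of_valSeq {k : ℕ} {π : Fin k → ℕ} {pos : Fin k → ℕ} (hpos : StrictMono pos)
    (hle : ∀ x, pos x ≤ m) (hπ : ∀ x y, π x < π y ↔ valSeq σ (pos x) < valSeq σ (pos y)) :
    CycContains σ π := by
  refine ⟨0, fun x => ⟨pos x, Nat.lt_succ_of_le (hle x)⟩, fun x y h => hpos h, fun x y => ?_⟩
  rw [hπ, rotSeq_zero, Fin.lt_def, ← valSeq_val, ← valSeq_val]

theorem tailAvoids_of_cycAvoids (hσ0 : σ 0 = 0) (h1234 : CycAvoids σ ![1, 2, 3, 4])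
    (h1423 : CycAvoids σ ![1, 4, 2, 3]) : TailAvoids m (valSeq σ) := by
  have h0 : valSeq σ 0 = 0 := by rw [valSeq_zero, hσ0, Fin.val_zero]
  have hpos : ∀ ⦃i j k⦄, 0 < i → i < j → j < k → k ≤ m →
      StrictMono ![0, i, j, k] ∧ ∀ x, ![0, i, j, k] x ≤ m := by
    intro i j k hi hij hjk hk
    refine ⟨Fin.strictMono_iff_lt_succ.2 fun x => ?_, fun x => ?_⟩ <;>
      fin_cases x <;> simp <;> omega
  constructor
  · rintro i j k hi hij hjk hk ⟨h1, h2⟩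
    refine h1234 (cycContains_of_valSeq (hpos hi hij hjk hk).1 (hpos hi hij hjk hk).2 fun x y => ?_)
    have := pos_of_bijOn_Iic (bijOn_valSeq σ) h0 hi (by omega)
    fin_cases x <;> fin_cases y <;> simp [h0] <;> omega
  · rintro i j k hi hij hjk hk ⟨h1, h2⟩
    refine h1423 (cycContains_of_valSeq (hpos hi hij hjk hk).1 (hpos hi hij hjk hk).2 fun x y => ?_)
    have := pos_of_bijOn_Iic (bijOn_valSeq σ) h0 (hi.trans hij) (by omega)
    fin_cases x <;> fin_cases y <;> simp [h0] <;> omega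

theorem cycAvoids_iff_tailAvoids (hσ0 : σ 0 = 0) :
    (CycAvoids σ ![1, 2, 3, 4] ∧ CycAvoids σ ![1, 4, 2, 3]) ↔ TailAvoids m (valSeq σ) :=
  ⟨fun h => tailAvoids_of_cycAvoids hσ0 h.1 h.2, fun hT =>
    ⟨fun h => not_tailAvoids_of_cycContains hσ0 (by decide) h hT,
      fun h => not_tailAvoids_of_cycContains hσ0 (by decide) h hT⟩⟩

end Patterns

/-- The sequence `0, a, a-1, …, b+1, m, m-1, …, a+1, b, b-1, …, 1`, followed by zeros. -/
def avoider (m b a p : ℕ) : ℕ :=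
  if p = 0 then 0
  else if p ≤ a - b then a + 1 - p
  else if p ≤ m - b then m + 1 + a - b - p
  else m + 1 - p

section Avoider

variable {m b a : ℕ}

theorem avoider_of_pos {p : ℕ} (hp : 0 < p) :
    avoider m b a p =
      if p ≤ a - b then a + 1 - p else if p ≤ m - b then m + 1 + a - b - p else m + 1 - p :=
  if_neg hp.ne'

theorem avoider_of_lt (ham : a ≤ m) {p : ℕ} (hp : m < p) : avoider m b a p = 0 := by
  unfold avoider
  split_ifs <;> omega

theorem bijOn_avoider (hba : b ≤ a) (ham : a ≤ m) :
    Set.BijOn (avoider m b a) (Set.Iic m) (Set.Iic m) := by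
  refine ⟨fun p hp => ?_, fun p hp q hq h => ?_, fun v hv => ?_⟩
  · simp only [Set.mem_Iic, avoider] at hp ⊢
    split_ifs <;> omega
  · simp only [Set.mem_Iic, avoider] at hp hq h
    split_ifs at h <;> omega
  · simp only [Set.mem_Iic] at hv
    refine ⟨if v = 0 then 0 else if v ≤ b then m + 1 - v else if v ≤ a then a + 1 - v
      else m + 1 + a - b - v, ?_, ?_⟩
    · simp only [Set.mem_Iic]
      split_ifs <;> omega
    · simp only [avoider]
      split_ifs <;> omega

theorem tailAvoids_avoider (hba : b ≤ a) (ham : a ≤ m) : TailAvoids m (avoider m b a) := by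
  constructor <;>
  · intro i j k hi hij hjk hk
    simp only [avoider]
    split_ifs <;> omega

theorem avoider_eq_of_eq_or_eq (h : b = a ∨ a = m) : avoider m b a = avoider m 0 m := by
  funext p
  simp only [avoider]
  split_ifs <;> omega

end Avoider

theorem StrictAntiOn.not_lt_lt_of_succ {α : Type*} [Preorder α] {f : ℕ → α} {s : Set ℕ}
    (hf : StrictAntiOn f s) {p q : ℕ} (hp : p ∈ s) (hp' : p + 1 ∈ s) (hq : q ∈ s) :
    ¬(f (p + 1) < f q ∧ f q < f p) := by
  rintro ⟨h1, h2⟩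
  rcases Nat.lt_or_ge p q with hpq | hqp
  · exact (hf.antitoneOn hp' hq hpq).not_gt h1
  · exact (hf.antitoneOn hq hp hqp).not_gt h2

/-! In this namespace `f` is a permutation of `0, …, m` fixing `0`, and `pm` is the position of
its maximum `m`. -/
namespace TailAvoids

variable {m pm : ℕ} {f : ℕ → ℕ}

theorem strictAntiOn_Ico (hT : TailAvoids m f) (hf : Set.BijOn f (Set.Iic m) (Set.Iic m))
    (hpm : pm ≤ m) (hfpm : f pm = m) : StrictAntiOn f (Set.Ico 1 pm) := by
  rintro p ⟨hp, -⟩ q ⟨-, hq⟩ hpq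
  have hne := ne_of_bijOn_Iic hf (p := p) (q := q) (by omega) (by omega) (by omega)
  have hqm := ne_of_bijOn_Iic hf (p := q) (q := pm) (by omega) hpm (by omega)
  have hfq : f q ≤ m := hf.mapsTo (show q ≤ m by omega)
  have := hT.no123 hp hpq hq hpm
  omega

theorem strictAntiOn_Icc (hT : TailAvoids m f) (hf : Set.BijOn f (Set.Iic m) (Set.Iic m))
    (hpm0 : 0 < pm) (hfpm : f pm = m) : StrictAntiOn f (Set.Icc pm m) := by
  rintro p ⟨hp, hpm⟩ q ⟨-, hqm⟩ hpq
  have hne := ne_of_bijOn_Iic hf hpm hqm hpq.ne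
  have hfq : f q ≤ m := hf.mapsTo hqm
  rcases hp.eq_or_lt with rfl | hp
  · omega
  · have hqm' := ne_of_bijOn_Iic hf (q := pm) hqm (by omega) (by omega)
    have := hT.no312 hpm0 hp hpq hqm
    omega

theorem not_lt_lt_of_succ_lt (hT : TailAvoids m f) (hf : Set.BijOn f (Set.Iic m) (Set.Iic m))
    (h0 : f 0 = 0) (hpm : pm ≤ m) (hfpm : f pm = m) {p w : ℕ} (hp : 0 < p) (hp' : p + 1 < pm) :
    ¬(f (p + 1) < w ∧ w < f p) := by
  rintro ⟨hw, hw'⟩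
  have hfp : f p ≤ m := hf.mapsTo (show p ≤ m by omega)
  obtain ⟨q, hq, rfl⟩ := hf.surjOn (show w ≤ m by omega)
  have hq0 : q ≠ 0 := by rintro rfl; omega
  have hqpm : q ≠ pm := by rintro rfl; omega
  rcases Nat.lt_or_gt_of_ne hqpm with hq' | hq'
  · exact (hT.strictAntiOn_Ico hf hpm hfpm).not_lt_lt_of_succ ⟨hp, by omega⟩ ⟨by omega, hp'⟩
      ⟨by omega, hq'⟩ ⟨hw, hw'⟩
  · exact hT.no312 hp (Nat.lt_succ_self p) (hp'.trans hq') hq ⟨hw, hw'⟩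

theorem apply_add_self_of_lt (hT : TailAvoids m f) (hf : Set.BijOn f (Set.Iic m) (Set.Iic m))
    (h0 : f 0 = 0) (hpm : pm ≤ m) (hfpm : f pm = m) {p : ℕ} (hp : 0 < p) (hp' : p < pm) :
    f p + p = f 1 + 1 := by
  induction p, hp using Nat.le_induction with
  | base => rfl
  | succ p hp ih =>
    have hlt := hT.strictAntiOn_Ico hf hpm hfpm ⟨hp, by omega⟩ ⟨by omega, hp'⟩ (Nat.lt_add_one p)
    have hgap := hT.not_lt_lt_of_succ_lt hf h0 hpm hfpm (w := f p - 1) hp hp'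
    have := ih (by omega)
    omega

theorem le_apply_one_add_one (hT : TailAvoids m f) (hf : Set.BijOn f (Set.Iic m) (Set.Iic m))
    (h0 : f 0 = 0) (hpm : pm ≤ m) (hfpm : f pm = m) : pm ≤ f 1 + 1 := by
  rcases Nat.lt_or_ge 1 pm with h | h
  · have := hT.apply_add_self_of_lt hf h0 hpm hfpm (p := pm - 1) (by omega) (by omega)
    have := pos_of_bijOn_Iic hf h0 (p := pm - 1) (by omega) (by omega)
    omega
  · omega

theorem lt_iff_mem_Ioc (hT : TailAvoids m f) (hf : Set.BijOn f (Set.Iic m) (Set.Iic m))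
    (h0 : f 0 = 0) (hpm : pm ≤ m) (hfpm : f pm = m) {q : ℕ} (hq : q ≤ m) :
    (0 < q ∧ q < pm) ↔ f q ∈ Set.Ioc (f 1 + 1 - pm) (f 1) := by
  have := hT.le_apply_one_add_one hf h0 hpm hfpm
  rw [Set.mem_Ioc]
  constructor
  · rintro ⟨hq0, hqpm⟩
    have := hT.apply_add_self_of_lt hf h0 hpm hfpm hq0 hqpm
    omega
  · rintro ⟨h1, h2⟩
    have := hT.apply_add_self_of_lt hf h0 hpm hfpm (p := f 1 + 1 - f q) (by omega) (by omega)
    have := hf.injOn hq (show f 1 + 1 - f q ≤ m by omega) (by omega)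
    omega

theorem mem_Ioc_of_lt_lt (hT : TailAvoids m f) (hf : Set.BijOn f (Set.Iic m) (Set.Iic m))
    (h0 : f 0 = 0) (hpm0 : 0 < pm) (hpm : pm ≤ m) (hfpm : f pm = m) {p w : ℕ} (hp : pm ≤ p)
    (hp' : p < m) (hw : f (p + 1) < w) (hw' : w < f p) : w ∈ Set.Ioc (f 1 + 1 - pm) (f 1) := by
  have hfp : f p ≤ m := hf.mapsTo hp'.le
  obtain ⟨q, hq, rfl⟩ := hf.surjOn (show w ≤ m by omega)
  have hq0 : q ≠ 0 := by rintro rfl; omega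
  refine (hT.lt_iff_mem_Ioc hf h0 hpm hfpm hq).1 ⟨by omega, Nat.lt_of_not_le fun hq' => ?_⟩
  exact (hT.strictAntiOn_Icc hf hpm0 hfpm).not_lt_lt_of_succ ⟨hp, hp'.le⟩ ⟨by omega, hp'⟩
    ⟨hq', hq⟩ ⟨hw, hw'⟩

/-- The jump skips exactly the values that come before the maximum. -/
theorem apply_succ_eq (hT : TailAvoids m f) (hf : Set.BijOn f (Set.Iic m) (Set.Iic m))
    (h0 : f 0 = 0) (hpm0 : 0 < pm) (hpm : pm ≤ m) (hfpm : f pm = m) {p : ℕ} (hp : pm ≤ p)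
    (hp' : p < m) : f (p + 1) = if f p = f 1 + 1 then f 1 + 1 - pm else f p - 1 := by
  have hlt : f (p + 1) < f p :=
    hT.strictAntiOn_Icc hf hpm0 hfpm ⟨hp, hp'.le⟩ ⟨by omega, hp'⟩ (Nat.lt_add_one p)
  have hout : ∀ q, pm ≤ q → q ≤ m → ¬(f 1 + 1 - pm < f q ∧ f q ≤ f 1) := fun q hq hqm =>
    (hT.lt_iff_mem_Ioc hf h0 hpm hfpm hqm).not.1 (by omega)
  have hp_out := hout p hp hp'.le
  have hp1_out := hout (p + 1) (by omega) (by omega)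
  have hgap := fun w => hT.mem_Ioc_of_lt_lt hf h0 hpm0 hpm hfpm hp hp' (w := w)
  rcases Nat.lt_or_ge (f (p + 1)) (f p - 1) with h | h
  · have := hgap (f p - 1) h (by omega)
    rw [Set.mem_Ioc] at this
    rcases Nat.lt_or_ge (f (p + 1)) (f 1 + 1 - pm) with h' | h'
    · simpa using hgap _ h' (by omega)
    · split_ifs <;> omega
  · split_ifs <;> omega

theorem eq_avoider (hT : TailAvoids m f) (hf : Set.BijOn f (Set.Iic m) (Set.Iic m))
    (h0 : f 0 = 0) (hpm0 : 0 < pm) (hpm : pm ≤ m) (hfpm : f pm = m) {p : ℕ} (hp : p ≤ m) :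
    f p = avoider m (f 1 + 1 - pm) (f 1) p := by
  have hpma := hT.le_apply_one_add_one hf h0 hpm hfpm
  have hf1 : (pm = 1 ∧ f 1 = m) ∨ (1 < pm ∧ f 1 < m) := by
    rcases Nat.lt_or_ge 1 pm with h | h
    · have := ne_of_bijOn_Iic hf (p := 1) (q := pm) (by omega) hpm h.ne
      have : f 1 ≤ m := hf.mapsTo (show 1 ≤ m by omega)
      omega
    · obtain rfl : pm = 1 := by omega
      exact Or.inl ⟨rfl, hfpm⟩
  rcases Nat.eq_zero_or_pos p with rfl | hp0
  · simp [avoider, h0]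
  rw [avoider_of_pos hp0]
  rcases Nat.lt_or_ge p pm with hp' | hp'
  · have := hT.apply_add_self_of_lt hf h0 hpm hfpm hp0 hp'
    split_ifs <;> omega
  induction p, hp' using Nat.le_induction with
  | base => split_ifs <;> omega
  | succ p hp' ih =>
    have ih := ih (by omega) (by omega)
    rw [hT.apply_succ_eq hf h0 hpm0 hpm hfpm hp' (by omega)]
    split_ifs at ih ⊢ <;> omega

theorem exists_eq_avoider (hT : TailAvoids m f) (hf : Set.BijOn f (Set.Iic m) (Set.Iic m))
    (h0 : f 0 = 0) : ∃ b a, b ≤ a ∧ a ≤ m ∧ ∀ p ≤ m, f p = avoider m b a p := by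
  rcases Nat.eq_zero_or_pos m with rfl | hm
  · refine ⟨0, 0, le_rfl, le_rfl, fun p hp => ?_⟩
    obtain rfl : p = 0 := Nat.le_zero.1 hp
    simp [avoider, h0]
  obtain ⟨pm, hpm, hfpm⟩ := hf.surjOn (show m ≤ m from le_rfl)
  have hpm0 : 0 < pm := Nat.pos_of_ne_zero <| by rintro rfl; omega
  have hf1 : f 1 ≤ m := hf.mapsTo (show 1 ≤ m by omega)
  exact ⟨f 1 + 1 - pm, f 1, by omega, hf1, fun p hp => hT.eq_avoider hf h0 hpm0 hpm hfpm hp⟩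

end TailAvoids

/-- Parameters `(b, a)` of the distinct avoiders: `b < a < m`, and `(0, m)` for the decreasing
one. -/
def avoiderParams (m : ℕ) : Finset (ℕ × ℕ) :=
  insert (0, m) {x ∈ Finset.range m ×ˢ Finset.range m | x.1 < x.2}

theorem mem_avoiderParams {m b a : ℕ} :
    (b, a) ∈ avoiderParams m ↔ (b = 0 ∧ a = m) ∨ (b < a ∧ a < m) := by
  simp only [avoiderParams, Finset.mem_insert, Finset.mem_filter, Finset.mem_product,
    Finset.mem_range, Prod.mk.injEq]
  omega

theorem card_avoiderParams (m : ℕ) : (avoiderParams m).card = 1 + m.choose 2 := by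
  rw [avoiderParams, Finset.card_insert_of_notMem, Finset.card_product_filter_lt,
    Finset.card_range, add_comm]
  simp

theorem exists_mem_avoiderParams {m b a : ℕ} (hba : b ≤ a) (ham : a ≤ m) :
    ∃ x ∈ avoiderParams m, avoider m x.1 x.2 = avoider m b a := by
  by_cases h : b = a ∨ a = m
  · exact ⟨(0, m), mem_avoiderParams.2 (Or.inl ⟨rfl, rfl⟩), (avoider_eq_of_eq_or_eq h).symm⟩
  · exact ⟨(b, a), mem_avoiderParams.2 (by omega), rfl⟩

theorem avoider_one {m b a : ℕ} (h : (b = 0 ∧ a = m) ∨ (b < a ∧ a < m)) : avoider m b a 1 = a := by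
  rw [avoider, if_neg one_ne_zero]
  split_ifs <;> omega

theorem avoider_sub_add_one_eq_iff {m b b' a : ℕ} (hb : b < a) (ha : a < m) :
    avoider m b' a (a - b + 1) = m ↔ b' = b := by
  rw [avoider, if_neg (Nat.succ_ne_zero _)]
  split_ifs <;> omega

theorem injOn_avoider (m : ℕ) :
    Set.InjOn (fun x : ℕ × ℕ => avoider m x.1 x.2) (avoiderParams m) := by
  rintro ⟨b, a⟩ hx ⟨b', a'⟩ hx' h
  rw [Finset.mem_coe, mem_avoiderParams] at hx hx'
  obtain rfl : a = a' := by simpa only [avoider_one hx, avoider_one hx'] using congrFun h 1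
  suffices b = b' by rw [this]
  by_cases hm : a = m
  · omega
  have hba : b < a := by omega
  have ham : a < m := by omega
  have hmax := (avoider_sub_add_one_eq_iff (b' := b) hba ham).2 rfl
  rwa [show avoider m b a = avoider m b' a from h, avoider_sub_add_one_eq_iff hba ham,
    eq_comm] at hmax

theorem valSeq_image_eq (m : ℕ) :
    (fun σ : Equiv.Perm (Fin (m + 1)) => valSeq ⇑σ) '' {σ |
        σ 0 = 0 ∧ (CycAvoids σ ![1, 2, 3, 4] ∧ CycAvoids σ ![1, 4, 2, 3])} =
      (fun x : ℕ × ℕ => avoider m x.1 x.2) '' avoiderParams m := by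
  ext f
  constructor
  · rintro ⟨σ, ⟨hσ0, hσ⟩, rfl⟩
    have h0 : valSeq σ 0 = 0 := by rw [valSeq_zero, hσ0, Fin.val_zero]
    obtain ⟨b, a, hba, ham, heq⟩ :=
      ((cycAvoids_iff_tailAvoids hσ0).1 hσ).exists_eq_avoider (bijOn_valSeq σ) h0
    obtain ⟨x, hx, hxeq⟩ := exists_mem_avoiderParams hba ham
    refine ⟨x, hx, hxeq.trans (funext fun p => ?_)⟩
    rcases Nat.lt_or_ge m p with hp | hp
    · exact (avoider_of_lt ham hp).trans (valSeq_of_lt σ hp).symm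
    · exact (heq p hp).symm
  · rintro ⟨⟨b, a⟩, hx, rfl⟩
    have hba : b ≤ a ∧ a ≤ m := by rw [Finset.mem_coe, mem_avoiderParams] at hx; omega
    obtain ⟨σ, hσ⟩ := exists_valSeq_eq (bijOn_avoider hba.1 hba.2) fun p => avoider_of_lt hba.2
    have hσ0 : σ 0 = 0 := Fin.ext (by rw [← valSeq_zero, hσ]; rfl)
    refine ⟨σ, ⟨hσ0, (cycAvoids_iff_tailAvoids hσ0).2 ?_⟩, hσ⟩
    rw [hσ]
    exact tailAvoids_avoider hba.1 hba.2

theorem card_av_1234_1423 (n : ℕ) (hn : 1 ≤ n) :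
    (AvClasses n fun σ => CycAvoids σ ![1,2,3,4] ∧ CycAvoids σ ![1,4,2,3]).ncard = 1 + Nat.choose (n - 1) 2 := by
  obtain ⟨m, rfl⟩ : ∃ m, n = m + 1 := ⟨n - 1, by omega⟩
  have hinj : Function.Injective fun σ : Equiv.Perm (Fin (m + 1)) => valSeq ⇑σ :=
    valSeq_injective.comp DFunLike.coe_injective
  rw [ncard_avClasses fun σ r => by simp only [cycAvoids_rotSeq], Nat.add_sub_cancel,
    ← hinj.injOn.ncard_image, valSeq_image_eq, (injOn_avoider m).ncard_image,
    Set.ncard_coe_finset, card_avoiderParams]
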